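/- arXiv:2601.19004 — 2 statements merged into one kernel-verified Lean document; each statement's English description precedes it below -/
import Mathlib

section
/- Asymptotic variance of the signed RESI equals 1 under the null (limit of the asymptotic variance). Let m ≥ 1, let ℓ ∈ ℝ^m be a row vector, and let f : ℝ^m → ℝ be continuously differentiable at θ ∈ ℝ^m with f(θ) > 0. Define the signed effect size g(θ*) := (ℓθ*)/sqrt(f(θ*)) for θ* near θ. If ℓθ = 0, then g is differentiable at θ with gradient ∇g(θ) = ℓᵀ/sqrt(f(θ)); consequently, for any m×m positive semidefinite matrix Σ satisfying ℓΣℓᵀ = f(θ), the asymptotic variance σ_S² := (∇g(θ))ᵀ Σ (∇g(θ)) equals 1. -/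
/-!
Since `ℓ ⬝ᵥ θ = 0`, the quotient rule at `θ` loses the term involving the derivative of
`√f`, leaving the gradient `ℓ / √(f θ)`; its quadratic form is then `ℓΣℓᵀ / f θ = 1`.
-/

open Matrix

section Derivative

variable {𝕜 E : Type*} [NontriviallyNormedField 𝕜] [NormedAddCommGroup E] [NormedSpace 𝕜 E]

theorem HasFDerivAt.div_of_eq_zero_left {g h : E → 𝕜} {g' : E →L[𝕜] 𝕜} {x : E}
    (hg : HasFDerivAt g g' x) (hh : DifferentiableAt 𝕜 h x) (hgx : g x = 0) (hhx : h x ≠ 0) :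
    HasFDerivAt (fun t => g t / h t) ((h x)⁻¹ • g') x := by
  simp_rw [div_eq_mul_inv]
  exact (hg.fun_mul (hh.fun_inv hhx).hasFDerivAt).congr_fderiv (by ext; simp [hgx])

theorem hasFDerivAt_dotProduct [CompleteSpace 𝕜] {n : Type*} [Fintype n] (ℓ x : n → 𝕜) :
    HasFDerivAt (fun t => ℓ ⬝ᵥ t) (LinearMap.toContinuousLinearMap (dotProductBilin 𝕜 𝕜 ℓ)) x :=
  (LinearMap.toContinuousLinearMap (dotProductBilin 𝕜 𝕜 ℓ)).hasFDerivAt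

end Derivative

theorem div_dotProduct_mulVec_div {n K : Type*} [Fintype n] [Field K] (A : Matrix n n K)
    (v : n → K) (c : K) :
    (fun i => v i / c) ⬝ᵥ A *ᵥ (fun i => v i / c) = (v ⬝ᵥ A *ᵥ v) / c ^ 2 := by
  have hv : (fun i => v i / c) = c⁻¹ • v := funext fun i => div_eq_inv_mul (v i) c
  rw [hv, mulVec_smul, dotProduct_smul, smul_dotProduct, smul_eq_mul, smul_eq_mul]
  ring

theorem signed_resi_null_asymptotic_variance_one_general
    {m : ℕ} (ℓ : Fin m → ℝ)
    (f : (Fin m → ℝ) → ℝ) (θ : Fin m → ℝ)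
    (hf : ContDiffAt ℝ 1 f θ) (hfθ : 0 < f θ)
    (hnull : ℓ ⬝ᵥ θ = 0) :
    (∃ D : (Fin m → ℝ) →L[ℝ] ℝ,
      HasFDerivAt (fun t => (ℓ ⬝ᵥ t) / Real.sqrt (f t)) D θ ∧
      ∀ v, D v = (ℓ ⬝ᵥ v) / Real.sqrt (f θ)) ∧
    ∀ Sig : Matrix (Fin m) (Fin m) ℝ, Sig.PosSemidef →
      ℓ ⬝ᵥ Sig.mulVec ℓ = f θ →
      (fun i => ℓ i / Real.sqrt (f θ)) ⬝ᵥ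
        Sig.mulVec (fun i => ℓ i / Real.sqrt (f θ)) = 1 := by
  have hsqrt : DifferentiableAt ℝ (fun t => Real.sqrt (f t)) θ :=
    (hf.differentiableAt one_ne_zero).sqrt hfθ.ne'
  refine ⟨⟨_, (hasFDerivAt_dotProduct ℓ θ).div_of_eq_zero_left hsqrt hnull (by positivity),
    fun v => ?_⟩, fun Sig _ hvar => ?_⟩
  · simp [div_eq_inv_mul]
  · rw [div_dotProduct_mulVec_div, hvar, Real.sq_sqrt hfθ.le, div_self hfθ.ne']

/-- Under the null `ℓθ = 0`, the signed effect size `g(θ*) = (ℓθ*)/sqrt(f(θ*))` is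
differentiable at `θ` with gradient `ℓᵀ/sqrt(f(θ))`, so for any positive semidefinite
`Σ` with `ℓΣℓᵀ = f(θ)` the asymptotic variance `(∇g(θ))ᵀ Σ (∇g(θ))` equals `1`. -/
theorem signed_resi_null_asymptotic_variance_one
    {m : ℕ} (hm : 1 ≤ m) (ℓ : Fin m → ℝ)
    (f : (Fin m → ℝ) → ℝ) (θ : Fin m → ℝ)
    (hf : ContDiffAt ℝ 1 f θ) (hfθ : 0 < f θ)
    (hnull : ℓ ⬝ᵥ θ = 0) :
    (∃ D : (Fin m → ℝ) →L[ℝ] ℝ,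
      HasFDerivAt (fun t => (ℓ ⬝ᵥ t) / Real.sqrt (f t)) D θ ∧
      ∀ v, D v = (ℓ ⬝ᵥ v) / Real.sqrt (f θ)) ∧
    ∀ Sig : Matrix (Fin m) (Fin m) ℝ, Sig.PosSemidef →
      ℓ ⬝ᵥ Sig.mulVec ℓ = f θ →
      (fun i => ℓ i / Real.sqrt (f θ)) ⬝ᵥ
        Sig.mulVec (fun i => ℓ i / Real.sqrt (f θ)) = 1 :=
  signed_resi_null_asymptotic_variance_one_general ℓ f θ hf hfθ hnull
end

section
/- Asymptotic equivalence of the F-statistic-based unsigned RESI estimator and the scaled estimator under the alternative. Fix integers m₁ ≥ 1 and m ≥ 1 and a real s > 0. Let (Tₙ²) be nonnegative real random variables with Tₙ²/n → s² in probability, and set Fₙ := Tₙ²/m₁. Define Ŝₙ^F := sqrt( max(0, (Fₙ·m₁·(n − m − 2) − m₁·(n − m)) / (n(n − m)) ) ) and S̃ₙ := sqrt(Tₙ²/n). Then √n(Ŝₙ^F − S̃ₙ) → 0 in probability (where terms are considered for n > m + 2). -/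
open MeasureTheory Filter Topology

/-!
With `x = Tₙ²/n`, the radicand of `Ŝₙ^F` is `x - (2x/(n - m) + m₁/n)`, a perturbation of `x`
of order `1/n` uniformly for `x` near `s²`. Near such `x` the square root is Lipschitz with
constant `1/√x ≤ 2/s`, so `√n |Ŝₙ^F - S̃ₙ| = O(1/√n)` on the event `|x - s²| ≤ 3s²/4`, whose
complement has vanishing probability.
-/

theorem Real.sqrt_max_zero (u : ℝ) : √(max 0 u) = √u := by
  rcases le_total u 0 with h | h
  · rw [max_eq_left h, Real.sqrt_zero, Real.sqrt_eq_zero_of_nonpos h]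
  · rw [max_eq_right h]

theorem Real.abs_sqrt_sub_sqrt_le {v : ℝ} (u : ℝ) (hv : 0 < v) :
    |√u - √v| ≤ |u - v| / √v := by
  rw [le_div_iff₀ (Real.sqrt_pos.mpr hv)]
  rcases le_total 0 u with hu | hu
  · have hfactor : (√u - √v) * (√u + √v) = u - v := by
      linear_combination mul_self_sqrt hu - mul_self_sqrt hv.le
    calc |√u - √v| * √v ≤ |√u - √v| * (√u + √v) := by
          gcongr; exact le_add_of_nonneg_left (sqrt_nonneg u)
      _ = |u - v| := by rw [← hfactor, abs_mul, abs_of_nonneg (by positivity : 0 ≤ √u + √v)]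
  · rw [sqrt_eq_zero_of_nonpos hu, zero_sub, abs_neg, abs_of_nonneg (sqrt_nonneg v),
      mul_self_sqrt hv.le, abs_of_nonpos (by linarith)]
    linarith

/-- `Ŝₙ^F` as a function of the value `t` of `Tₙ²`. -/
noncomputable def fResi (m₁ m n : ℕ) (t : ℝ) : ℝ :=
  √(max 0 (((t / (m₁ : ℝ)) * (m₁ : ℝ) * ((n : ℝ) - m - 2) - (m₁ : ℝ) * ((n : ℝ) - m))
    / ((n : ℝ) * ((n : ℝ) - m))))

theorem fResi_radicand_eq {t a n m : ℝ} (ha : a ≠ 0) (hn : n ≠ 0) (hnm : n - m ≠ 0) :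
    (t / a * a * (n - m - 2) - a * (n - m)) / (n * (n - m))
      = t / n - (2 * (t / n) / (n - m) + a / n) := by
  field_simp
  ring

theorem abs_fResi_sub_sqrt_le {m₁ m n : ℕ} {t : ℝ} (hm₁ : m₁ ≠ 0) (hn : 2 * m < n) (ht : 0 < t) :
    |fResi m₁ m n t - √(t / n)| ≤ (4 * (t / n) + m₁) / n / √(t / n) := by
  have hn' : (2 * m : ℝ) < n := by exact_mod_cast hn
  have hm0 : (0 : ℝ) ≤ m := m.cast_nonneg
  have hnm : (0 : ℝ) < n - m := by linarith
  have hn0 : (0 : ℝ) < n := by linarith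
  have hx : 0 < t / n := by positivity
  rw [fResi, fResi_radicand_eq (by exact_mod_cast hm₁) hn0.ne' hnm.ne', Real.sqrt_max_zero]
  refine (Real.abs_sqrt_sub_sqrt_le _ hx).trans (div_le_div_of_nonneg_right ?_ (Real.sqrt_nonneg _))
  rw [sub_sub_cancel_left, abs_neg, abs_of_nonneg (by positivity), add_div, add_le_add_iff_right,
    div_le_div_iff₀ hnm hn0]
  nlinarith

theorem eventually_abs_sqrt_mul_fResi_sub_le (m : ℕ) {m₁ : ℕ} (hm₁ : m₁ ≠ 0) {s ε : ℝ}
    (hs : 0 < s) (hε : 0 < ε) :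
    ∀ᶠ n : ℕ in atTop, ∀ t : ℝ, |t / n - s ^ 2| ≤ 3 * s ^ 2 / 4 →
      |√n * (fResi m₁ m n t - √(t / n))| ≤ ε := by
  have hbound : Tendsto (fun n : ℕ => 2 * (7 * s ^ 2 + m₁) / s / √n) atTop (𝓝 0) :=
    tendsto_const_nhds.div_atTop (Real.tendsto_sqrt_atTop.comp tendsto_natCast_atTop_atTop)
  filter_upwards [hbound.eventually (eventually_le_nhds hε), eventually_gt_atTop (2 * m)]
    with n hboundn hn t ht
  have hn0 : (0 : ℝ) < n := by exact_mod_cast (Nat.zero_le _).trans_lt hn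
  obtain ⟨hxlo, hxhi⟩ := abs_le.mp ht
  have hx : 0 < t / n := by nlinarith
  have hsqrtx : s / 2 ≤ √(t / n) := Real.le_sqrt_of_sq_le (by linarith)
  calc |√n * (fResi m₁ m n t - √(t / n))|
      = √n * |fResi m₁ m n t - √(t / n)| := by rw [abs_mul, abs_of_nonneg (Real.sqrt_nonneg _)]
    _ ≤ √n * ((4 * (t / n) + m₁) / n / √(t / n)) := by
        gcongr
        exact abs_fResi_sub_sqrt_le hm₁ hn ((div_pos_iff_of_pos_right hn0).mp hx)
    _ ≤ √n * ((7 * s ^ 2 + m₁) / n / (s / 2)) := by gcongr √n * ((?_ + _) / _ / ?_); linarith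
    _ = 2 * (7 * s ^ 2 + m₁) / s / √n := by
        field_simp
        exact Real.sq_sqrt hn0.le
    _ ≤ ε := hboundn

theorem tendsto_measure_lt_abs_of_eventually_imp {ι Ω : Type*} [MeasurableSpace Ω]
    {μ : Measure Ω} {l : Filter ι} {X Y : ι → Ω → ℝ} {c δ ε : ℝ}
    (hX : Tendsto (fun i => μ {ω | δ < |X i ω - c|}) l (𝓝 0))
    (hXY : ∀ᶠ i in l, ∀ ω, |X i ω - c| ≤ δ → |Y i ω| ≤ ε) :
    Tendsto (fun i => μ {ω | ε < |Y i ω|}) l (𝓝 0) := by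
  refine tendsto_of_tendsto_of_tendsto_of_le_of_le' tendsto_const_nhds hX
    (Eventually.of_forall fun _ => zero_le) ?_
  filter_upwards [hXY] with i hi
  exact measure_mono fun ω hω => not_le.mp fun h => (not_le.mpr hω) (hi ω h)

theorem f_based_resi_asymp_equiv_general
    (m₁ m : ℕ) (hm₁ : 1 ≤ m₁) (s : ℝ) (hs : 0 < s)
    {Ω : Type*} [MeasurableSpace Ω] (P : Measure Ω)
    (T2 : ℕ → Ω → ℝ)
    (hprob : ∀ ε > (0 : ℝ),
      Tendsto (fun n : ℕ => P {ω | ε < |T2 n ω / (n : ℝ) - s ^ 2|}) atTop (𝓝 0)) :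
    ∀ ε > (0 : ℝ),
      Tendsto (fun n : ℕ => P {ω | ε <
          |Real.sqrt n *
            (Real.sqrt (max 0
              (((T2 n ω / (m₁ : ℝ)) * (m₁ : ℝ) * ((n : ℝ) - m - 2)
                  - (m₁ : ℝ) * ((n : ℝ) - m))
                / ((n : ℝ) * ((n : ℝ) - m))))
              - Real.sqrt (T2 n ω / (n : ℝ)))|}) atTop (𝓝 0) := by
  intro ε hε
  refine tendsto_measure_lt_abs_of_eventually_imp (hprob (3 * s ^ 2 / 4) (by positivity)) ?_
  filter_upwards [eventually_abs_sqrt_mul_fResi_sub_le m (Nat.pos_iff_ne_zero.mp hm₁) hs hε]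
    with n hn ω hω
  exact hn _ hω

/-- **Asymptotic equivalence of the F-statistic-based unsigned RESI estimator and the
scaled estimator under the alternative.** If `Tₙ²/n → s² > 0` in probability and
`Fₙ = Tₙ²/m₁`, then `√n(Ŝₙ^F − S̃ₙ) → 0` in probability, where
`Ŝₙ^F = sqrt(max(0, (Fₙm₁(n−m−2) − m₁(n−m))/(n(n−m))))` and `S̃ₙ = sqrt(Tₙ²/n)`. -/
theorem f_based_resi_asymp_equiv
    (m₁ m : ℕ) (hm₁ : 1 ≤ m₁) (hm : 1 ≤ m) (s : ℝ) (hs : 0 < s)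
    {Ω : Type*} [MeasurableSpace Ω] (P : Measure Ω) [IsProbabilityMeasure P]
    (T2 : ℕ → Ω → ℝ) (hmeas : ∀ n, Measurable (T2 n))
    (hnonneg : ∀ n ω, 0 ≤ T2 n ω)
    (hprob : ∀ ε > (0 : ℝ),
      Tendsto (fun n : ℕ => P {ω | ε < |T2 n ω / (n : ℝ) - s ^ 2|}) atTop (𝓝 0)) :
    ∀ ε > (0 : ℝ),
      Tendsto (fun n : ℕ => P {ω | ε <
          |Real.sqrt n *
            (Real.sqrt (max 0
              (((T2 n ω / (m₁ : ℝ)) * (m₁ : ℝ) * ((n : ℝ) - m - 2)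
                  - (m₁ : ℝ) * ((n : ℝ) - m))
                / ((n : ℝ) * ((n : ℝ) - m))))
              - Real.sqrt (T2 n ω / (n : ℝ)))|}) atTop (𝓝 0) :=
  f_based_resi_asymp_equiv_general m₁ m hm₁ s hs P T2 hprob
end
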